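/- arXiv:2007.06117 — 3 statements merged into one kernel-verified Lean document; each statement's English description precedes it below -/
import Mathlib

section
/- Suppose 0 ≤ Δ < K and Θ : [0,∞) → ℝ solves Θ' = Δ − K sin(Θ) with initial value Θ(0) ∈ (arcsin(Δ/K) − ε, arcsin(Δ/K) + ε) for sufficiently small ε > 0 (specifically, with Θ(0) in the open interval (−π − arcsin(Δ/K), π − arcsin(Δ/K))). Then Θ(t) → arcsin(Δ/K) as t → ∞. -/
/-!
Write the right-hand side as `f θ = Δ - K sin θ = K (sin θ* - sin θ)`. It vanishes at
`-π - θ*`, `θ*` and `π - θ*`, is positive between the first two zeros and negative between the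
last two. By uniqueness of solutions, a solution of `x' = f x` never reaches a zero of `f` unless
it starts there, so a solution started between two consecutive zeros stays between them; there
it is monotone and bounded, hence convergent, and its limit must be a zero of `f`, i.e. `θ*`.
-/

open Real Filter Set Topology

theorem eq_zero_of_tendsto_of_hasDerivAt {x x' : ℝ → ℝ} {L c : ℝ}
    (hx : ∀ᶠ t in atTop, HasDerivAt x (x' t) t) (hL : Tendsto x atTop (𝓝 L))
    (hc : Tendsto x' atTop (𝓝 c)) : c = 0 := by
  obtain ⟨T, hT⟩ := eventually_atTop.1 hx
  have hs : Tendsto (fun t => max t T) atTop atTop :=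
    tendsto_atTop_mono (fun t => le_max_left t T) tendsto_id
  have hmvt : ∀ t, ∃ ξ ∈ Ioo (max t T) (max t T + 1),
      x' ξ = x (max t T + 1) - x (max t T) := fun t => by
    have hderiv : ∀ s ∈ Icc (max t T) (max t T + 1), HasDerivAt x (x' s) s :=
      fun s hs => hT s ((le_max_right t T).trans hs.1)
    obtain ⟨ξ, hξ, hslope⟩ := exists_hasDerivAt_eq_slope x x' (lt_add_one _)
      (HasDerivAt.continuousOn hderiv) (fun s hs => hderiv s (Ioo_subset_Icc_self hs))
    exact ⟨ξ, hξ, by simpa using hslope⟩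
  choose ξ hξ hξ_eq using hmvt
  have hξ_top : Tendsto ξ atTop atTop :=
    tendsto_atTop_mono (fun t => (le_max_left t T).trans (hξ t).1.le) tendsto_id
  have hdiff : Tendsto (fun t => x (max t T + 1) - x (max t T)) atTop (𝓝 (L - L)) :=
    ((hL.comp (tendsto_atTop_add_const_right _ 1 hs)).sub (hL.comp hs))
  rw [sub_self] at hdiff
  exact tendsto_nhds_unique (hc.comp hξ_top)
    (by simpa only [Function.comp_def, hξ_eq] using hdiff)

theorem MonotoneOn.exists_tendsto_atTop {x : ℝ → ℝ} {a : ℝ} (hmono : MonotoneOn x (Ici a))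
    (hbdd : BddAbove (x '' Ici a)) : ∃ L, Tendsto x atTop (𝓝 L) := by
  have hmono' : Monotone fun t => x (max a t) := fun s t hst =>
    hmono (le_max_left a s) (le_max_left a t) (max_le_max le_rfl hst)
  have hbdd' : BddAbove (range fun t => x (max a t)) :=
    hbdd.mono (range_subset_iff.2 fun t => mem_image_of_mem x (le_max_left a t))
  refine ⟨_, (tendsto_atTop_ciSup hmono' hbdd').congr' ?_⟩
  filter_upwards [eventually_ge_atTop a] with t ht
  rw [max_eq_right ht]

section AutonomousODE

variable {f x : ℝ → ℝ} {k : NNReal}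

theorem apply_eq_iff_apply_zero_eq (hf : LipschitzWith k f)
    (hx : ∀ t ≥ 0, HasDerivAt x (f (x t)) t) {e t : ℝ} (he : f e = 0) (ht : 0 ≤ t) :
    x t = e ↔ x 0 = e := by
  have hcont : ContinuousOn x (Icc 0 t) := HasDerivAt.continuousOn fun s hs => hx s hs.1
  have hconst : ∀ s, HasDerivAt (fun _ => e) (f e) s := fun s => by
    simpa only [he] using hasDerivAt_const (𝕜 := ℝ) s e
  constructor
  · intro hxt
    exact ODE_solution_unique_of_mem_Icc_left (v := fun _ => f) (s := fun _ => univ)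
      (fun _ _ => hf.lipschitzOnWith) hcont (fun s hs => (hx s hs.1.le).hasDerivWithinAt)
      (fun _ _ => trivial) continuousOn_const (fun s _ => (hconst s).hasDerivWithinAt)
      (fun _ _ => trivial) hxt (left_mem_Icc.2 ht)
  · intro hx0
    exact ODE_solution_unique (v := fun _ => f) (fun _ => hf) hcont
      (fun s hs => (hx s hs.1).hasDerivWithinAt) continuousOn_const
      (fun s _ => (hconst s).hasDerivWithinAt) hx0 (right_mem_Icc.2 ht)

theorem mapsTo_Ioo_of_apply_zero_mem (hf : LipschitzWith k f)
    (hx : ∀ t ≥ 0, HasDerivAt x (f (x t)) t) {a b : ℝ} (ha : f a = 0) (hb : f b = 0)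
    (h0 : x 0 ∈ Ioo a b) : MapsTo x (Ici 0) (Ioo a b) := by
  have hconn : IsPreconnected (x '' Ici 0) :=
    isPreconnected_Ici.image x fun s hs => (hx s hs).continuousAt.continuousWithinAt
  have hmem : ∀ t ≥ (0 : ℝ), x t ∈ x '' Ici 0 := fun t ht => mem_image_of_mem x ht
  have hnot : ∀ e, f e = 0 → x 0 ≠ e → e ∉ x '' Ici 0 := by
    rintro e he hx0 ⟨s, hs, rfl⟩
    exact hx0 ((apply_eq_iff_apply_zero_eq hf hx he hs).1 rfl)
  intro t ht
  constructor
  · by_contra! hle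
    exact hnot a ha h0.1.ne' (hconn.Icc_subset (hmem t ht) (hmem 0 le_rfl) ⟨hle, h0.1.le⟩)
  · by_contra! hle
    exact hnot b hb h0.2.ne (hconn.Icc_subset (hmem 0 le_rfl) (hmem t ht) ⟨h0.2.le, hle⟩)

theorem tendsto_of_pos_on_Ioo (hf : LipschitzWith k f)
    (hx : ∀ t ≥ 0, HasDerivAt x (f (x t)) t) {a e : ℝ} (ha : f a = 0) (he : f e = 0)
    (hpos : ∀ y ∈ Ioo a e, 0 < f y) (h0 : x 0 ∈ Ioo a e) : Tendsto x atTop (𝓝 e) := by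
  have hmaps := mapsTo_Ioo_of_apply_zero_mem hf hx ha he h0
  have hmono : MonotoneOn x (Ici 0) :=
    monotoneOn_of_hasDerivWithinAt_nonneg (convex_Ici 0)
      (HasDerivAt.continuousOn fun t ht => hx t ht)
      (fun t ht => (hx t (interior_subset ht)).hasDerivWithinAt)
      (fun t ht => (hpos _ (hmaps (interior_subset ht))).le)
  obtain ⟨L, hL⟩ := hmono.exists_tendsto_atTop
    ⟨e, forall_mem_image.2 fun t ht => (hmaps ht).2.le⟩
  have hLe : L ≤ e := le_of_tendsto hL <| by
    filter_upwards [eventually_ge_atTop 0] with t ht using (hmaps ht).2.le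
  have hx0L : x 0 ≤ L := ge_of_tendsto hL <| by
    filter_upwards [eventually_ge_atTop 0] with t ht using hmono self_mem_Ici ht ht
  have hfL : f L = 0 := eq_zero_of_tendsto_of_hasDerivAt
    (eventually_ge_atTop 0 |>.mono hx) hL ((hf.continuous.tendsto L).comp hL)
  obtain hLlt | rfl := hLe.lt_or_eq
  · exact absurd hfL (hpos L ⟨h0.1.trans_le hx0L, hLlt⟩).ne'
  · exact hL

theorem tendsto_of_pos_on_Ioo_of_neg_on_Ioo (hf : LipschitzWith k f)
    (hx : ∀ t ≥ 0, HasDerivAt x (f (x t)) t) {a e b : ℝ} (ha : f a = 0) (he : f e = 0)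
    (hb : f b = 0) (hpos : ∀ y ∈ Ioo a e, 0 < f y) (hneg : ∀ y ∈ Ioo e b, f y < 0)
    (h0 : x 0 ∈ Ioo a b) : Tendsto x atTop (𝓝 e) := by
  rcases lt_trichotomy (x 0) e with hlt | heq | hgt
  · exact tendsto_of_pos_on_Ioo hf hx ha he hpos ⟨h0.1, hlt⟩
  · refine tendsto_const_nhds.congr' ?_
    filter_upwards [eventually_ge_atTop 0] with t ht
    exact ((apply_eq_iff_apply_zero_eq hf hx he ht).2 heq).symm
  · -- `-x` solves the reflected equation, for which `-e` is approached from below.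
    have hf' : LipschitzWith (k * 1) fun y => -f (-y) := (hf.comp LipschitzWith.id.neg).neg
    have hx' : ∀ t ≥ 0, HasDerivAt (-x) (-f (-(-x) t)) t := fun t ht => by
      simpa using (hx t ht).neg
    have := tendsto_of_pos_on_Ioo hf' hx' (a := -b) (e := -e) (by simpa using hb)
      (by simpa using he) (fun y hy => neg_pos.2 (hneg _ ⟨lt_neg.1 hy.2, neg_lt.1 hy.1⟩))
      ⟨neg_lt_neg h0.2, neg_lt_neg hgt⟩
    simpa using this.neg

end AutonomousODE

theorem sin_lt_sin_of_neg_pi_sub_lt_of_lt {e θ : ℝ} (he : e ≤ π / 2) (h1 : -π - e < θ)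
    (h2 : θ < e) : sin θ < sin e := by
  rw [← sub_neg, sin_sub_sin]
  refine mul_neg_of_neg_of_pos (mul_neg_of_pos_of_neg two_pos ?_) (cos_pos_of_mem_Ioo ⟨?_, ?_⟩)
  · exact sin_neg_of_neg_of_neg_pi_lt (by linarith) (by linarith)
  · linarith
  · linarith

theorem sin_lt_sin_of_lt_of_lt_pi_sub {e θ : ℝ} (he : -(π / 2) ≤ e) (h1 : e < θ)
    (h2 : θ < π - e) : sin e < sin θ := by
  rw [← sub_pos, sin_sub_sin]
  refine mul_pos (mul_pos two_pos ?_) (cos_pos_of_mem_Ioo ⟨?_, ?_⟩)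
  · exact sin_pos_of_pos_of_lt_pi (by linarith) (by linarith)
  · linarith
  · linarith

theorem stmt5 (K Δ : ℝ) (hK : 0 < K) (h0 : 0 ≤ Δ) (h1 : Δ < K) (Θ : ℝ → ℝ)
    (hode : ∀ t ≥ 0, HasDerivAt Θ (Δ - K * Real.sin (Θ t)) t)
    (hinit : Θ 0 ∈ Set.Ioo (-π - Real.arcsin (Δ / K)) (π - Real.arcsin (Δ / K))) :
    Tendsto Θ atTop (nhds (Real.arcsin (Δ / K))) := by
  set θs := arcsin (Δ / K)
  have hθs_nonneg : 0 ≤ θs := arcsin_nonneg.2 (div_nonneg h0 hK.le)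
  have hθs_lt : θs < π / 2 := arcsin_lt_pi_div_two.2 ((div_lt_one hK).2 h1)
  have hrhs : ∀ y, Δ - K * sin y = K * (sin θs - sin y) := fun y => by
    rw [sin_arcsin (by linarith [div_nonneg h0 hK.le]) ((div_lt_one hK).2 h1).le]
    field_simp
  have hlip : LipschitzWith (0 + ‖K‖₊ * 1) fun y => Δ - K * sin y :=
    (LipschitzWith.const Δ).sub ((lipschitzWith_smul K).comp lipschitzWith_sin)
  refine tendsto_of_pos_on_Ioo_of_neg_on_Ioo hlip hode ?_ ?_ ?_ ?_ ?_ hinit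
  · rw [hrhs, show -π - θs = -(θs + π) by ring, sin_neg, sin_add_pi, neg_neg, sub_self,
      mul_zero]
  · rw [hrhs, sub_self, mul_zero]
  · rw [hrhs, sin_pi_sub, sub_self, mul_zero]
  · intro y hy
    rw [hrhs]
    exact mul_pos hK (sub_pos.2 (sin_lt_sin_of_neg_pi_sub_lt_of_lt hθs_lt.le hy.1 hy.2))
  · intro y hy
    rw [hrhs]
    exact mul_neg_of_pos_of_neg hK
      (sub_neg.2 (sin_lt_sin_of_lt_of_lt_pi_sub (by linarith) hy.1 hy.2))
end

section
/- Two Kuramoto oscillators with equal initial phases θ₁(0) = θ₂(0) and |ω₁ − ω₂| ≤ K achieve frequency synchronization: |θ₁'(t) − θ₂'(t)| → 0 as t → ∞. -/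
/-!
The phase difference `φ = θ₁ - θ₂` solves the autonomous scalar equation `φ' = f φ` with
`f y = (ω₁ - ω₂) - K sin y`, and `θ₁' - θ₂' = f (φ t)`. Since `|ω₁ - ω₂| ≤ K`, `f` has zeros
`a ≤ 0 ≤ b`; by uniqueness of solutions of a Lipschitz equation, `φ` can never reach an
equilibrium it did not start at, so it stays in `[a, b]` and `f (φ t)` never changes sign.
Thus `φ` is monotone and bounded, converges to some `L`, and the mean value theorem on the
intervals `[n, n + 1]` forces `f L = 0`; hence `f (φ t) → 0`.
-/

open Real Filter Set Topology

theorem MonotoneOn.exists_tendsto_atTop_of_bddAbove {x : ℝ → ℝ} {a : ℝ}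
    (h : MonotoneOn x (Ici a)) (hb : BddAbove (x '' Ici a)) : ∃ L, Tendsto x atTop (𝓝 L) := by
  set y : ℝ → ℝ := fun t => x (max t a)
  have hy : Monotone y := fun s t hst =>
    h (le_max_right s a) (le_max_right t a) (max_le_max_right a hst)
  have hyb : BddAbove (range y) :=
    hb.mono (range_subset_iff.2 fun t => mem_image_of_mem x (le_max_right t a))
  refine ⟨_, (tendsto_atTop_ciSup hy hyb).congr' ?_⟩
  filter_upwards [eventually_ge_atTop a] with t ht
  simp only [y, max_eq_left ht]

def IsForwardSolution (f x : ℝ → ℝ) : Prop :=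
  ∀ t ≥ 0, HasDerivAt x (f (x t)) t

namespace IsForwardSolution

variable {f x : ℝ → ℝ}

theorem continuousOn (hx : IsForwardSolution f x) : ContinuousOn x (Ici 0) :=
  fun t ht => (hx t ht).continuousAt.continuousWithinAt

theorem neg (hx : IsForwardSolution f x) :
    IsForwardSolution (fun y => -f (-y)) (fun t => -x t) := by
  intro t ht
  simp only [neg_neg]
  exact (hx t ht).neg

variable {k : NNReal}

theorem eq_of_eq_of_map_eq_zero (hx : IsForwardSolution f x) (hf : LipschitzWith k f)
    {c s t : ℝ} (hc : f c = 0) (hs : 0 ≤ s) (hxs : x s = c) (ht : 0 ≤ t) : x t = c := by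
  have hconst (t : ℝ) : HasDerivAt (fun _ => c) (f c) t := hc ▸ hasDerivAt_const t c
  rcases le_total s t with hst | hts
  · exact ODE_solution_unique (v := fun _ => f) (fun _ => hf)
      (hx.continuousOn.mono fun r hr => hs.trans hr.1)
      (fun r hr => (hx r (hs.trans hr.1)).hasDerivWithinAt)
      continuousOn_const (fun r _ => (hconst r).hasDerivWithinAt) hxs ⟨hst, le_rfl⟩
  · exact ODE_solution_unique_of_mem_Icc_left (v := fun _ => f) (s := fun _ => univ)
      (fun _ _ => hf.lipschitzOnWith) (hx.continuousOn.mono fun r hr => ht.trans hr.1)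
      (fun r hr => (hx r (ht.trans hr.1.le)).hasDerivWithinAt) (fun _ _ => mem_univ _)
      continuousOn_const (fun r _ => (hconst r).hasDerivWithinAt) (fun _ _ => mem_univ _)
      hxs ⟨le_rfl, hts⟩

theorem mem_Icc_of_map_eq_zero (hx : IsForwardSolution f x) (hf : LipschitzWith k f)
    {a b : ℝ} (ha : f a = 0) (hb : f b = 0) (h0 : x 0 ∈ Icc a b) {t : ℝ} (ht : 0 ≤ t) :
    x t ∈ Icc a b := by
  have hconn : IsPreconnected (x '' Ici 0) := isPreconnected_Ici.image x hx.continuousOn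
  have hx0 : x 0 ∈ x '' Ici 0 := mem_image_of_mem x self_mem_Ici
  have hxt : x t ∈ x '' Ici 0 := mem_image_of_mem x ht
  by_contra hout
  rcases not_and_or.1 hout with hlt | hgt
  · obtain ⟨s, hs, hxs⟩ := hconn.Icc_subset hxt hx0 ⟨(not_le.1 hlt).le, h0.1⟩
    exact hlt (hx.eq_of_eq_of_map_eq_zero hf ha hs hxs ht).ge
  · obtain ⟨s, hs, hxs⟩ := hconn.Icc_subset hx0 hxt ⟨h0.2, (not_le.1 hgt).le⟩
    exact hgt (hx.eq_of_eq_of_map_eq_zero hf hb hs hxs ht).le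

theorem map_pos_of_map_pos (hx : IsForwardSolution f x) (hf : LipschitzWith k f)
    (h0 : 0 < f (x 0)) {t : ℝ} (ht : 0 ≤ t) : 0 < f (x t) := by
  by_contra hle
  have hconn : IsPreconnected ((f ∘ x) '' Ici 0) :=
    isPreconnected_Ici.image _ (hf.continuous.comp_continuousOn hx.continuousOn)
  obtain ⟨s, hs, hfs⟩ := hconn.Icc_subset (mem_image_of_mem _ ht)
    (mem_image_of_mem _ self_mem_Ici) ⟨not_lt.1 hle, h0.le⟩
  rw [hx.eq_of_eq_of_map_eq_zero hf hfs hs rfl le_rfl] at h0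
  exact h0.ne' hfs

theorem map_eq_zero_of_tendsto (hx : IsForwardSolution f x) (hf : Continuous f) {L : ℝ}
    (hL : Tendsto x atTop (𝓝 L)) : f L = 0 := by
  have hslope (n : ℕ) : ∃ ξ ∈ Ioo (n : ℝ) (n + 1), f (x ξ) = x (n + 1) - x n := by
    obtain ⟨ξ, hξ, hξeq⟩ := exists_hasDerivAt_eq_slope x (f ∘ x) (lt_add_one (n : ℝ))
      (hx.continuousOn.mono fun r hr => n.cast_nonneg.trans hr.1)
      (fun r hr => hx r (n.cast_nonneg.trans hr.1.le))
    exact ⟨ξ, hξ, by simpa using hξeq⟩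
  choose ξ hξ hξeq using hslope
  have hξtop : Tendsto ξ atTop atTop :=
    tendsto_atTop_mono (fun n => (hξ n).1.le) tendsto_natCast_atTop_atTop
  have hdiff : Tendsto (fun n : ℕ => x (n + 1) - x n) atTop (𝓝 (L - L)) :=
    ((hL.comp (tendsto_natCast_atTop_atTop.atTop_add tendsto_const_nhds)).sub
      (hL.comp tendsto_natCast_atTop_atTop))
  rw [sub_self, ← funext hξeq] at hdiff
  exact tendsto_nhds_unique ((hf.tendsto L).comp (hL.comp hξtop)) hdiff

theorem tendsto_map_of_map_pos (hx : IsForwardSolution f x) (hf : LipschitzWith k f)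
    (h0 : 0 < f (x 0)) {b : ℝ} (hb : ∀ t ≥ 0, x t ≤ b) :
    Tendsto (fun t => f (x t)) atTop (𝓝 0) := by
  have hmono : MonotoneOn x (Ici 0) :=
    monotoneOn_of_hasDerivWithinAt_nonneg (convex_Ici 0) hx.continuousOn
      (fun t ht => (hx t (interior_subset ht)).hasDerivWithinAt)
      (fun t ht => (hx.map_pos_of_map_pos hf h0 (interior_subset ht)).le)
  obtain ⟨L, hL⟩ := hmono.exists_tendsto_atTop_of_bddAbove ⟨b, fun _ ⟨t, ht, hxt⟩ => hxt ▸ hb t ht⟩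
  rw [← hx.map_eq_zero_of_tendsto hf.continuous hL]
  exact (hf.continuous.tendsto L).comp hL

theorem tendsto_map_of_mem_Icc (hx : IsForwardSolution f x) (hf : LipschitzWith k f) {a b : ℝ}
    (hab : ∀ t ≥ 0, x t ∈ Icc a b) : Tendsto (fun t => f (x t)) atTop (𝓝 0) := by
  rcases lt_trichotomy (f (x 0)) 0 with hneg | hzero | hpos
  · have hneg' : 0 < -f (- -x 0) := by simpa using hneg
    have := (hx.neg.tendsto_map_of_map_pos (hf.comp LipschitzWith.id.neg).neg hneg'
      fun t ht => neg_le_neg (hab t ht).1).neg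
    simpa using this
  · refine tendsto_const_nhds.congr' ?_
    filter_upwards [eventually_ge_atTop 0] with t ht
    rw [hx.eq_of_eq_of_map_eq_zero hf hzero le_rfl rfl ht, hzero]
  · exact hx.tendsto_map_of_map_pos hf hpos fun t ht => (hab t ht).2

end IsForwardSolution

theorem exists_nonpos_nonneg_mul_sin_eq {K d : ℝ} (hK : 0 < K) (hd : |d| ≤ K) :
    ∃ a b : ℝ, a ≤ 0 ∧ 0 ≤ b ∧ K * sin a = d ∧ K * sin b = d := by
  have hdK : d / K ∈ Icc (-1) 1 := by
    obtain ⟨hlo, hhi⟩ := abs_le.1 hd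
    exact ⟨by rwa [le_div_iff₀ hK, neg_one_mul], by rwa [div_le_one hK]⟩
  have hsin : K * sin (π - arcsin (d / K)) = d := by
    rw [sin_pi_sub, sin_arcsin' hdK]
    field_simp
  have hlo := neg_pi_div_two_le_arcsin (d / K)
  have hhi := arcsin_le_pi_div_two (d / K)
  refine ⟨π - arcsin (d / K) - 2 * π, π - arcsin (d / K), by linarith [pi_pos], by linarith,
    by rwa [sin_sub_two_pi], hsin⟩

theorem stmt9 (K ω₁ ω₂ : ℝ) (hK : 0 < K) (hgap : |ω₁ - ω₂| ≤ K) (θ₁ θ₂ : ℝ → ℝ)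
    (h₁ : ∀ t ≥ 0, HasDerivAt θ₁ (ω₁ + K / 2 * Real.sin (θ₂ t - θ₁ t)) t)
    (h₂ : ∀ t ≥ 0, HasDerivAt θ₂ (ω₂ + K / 2 * Real.sin (θ₁ t - θ₂ t)) t)
    (hinit : θ₁ 0 = θ₂ 0) :
    Tendsto (fun t => |(ω₁ + K / 2 * Real.sin (θ₂ t - θ₁ t)) -
      (ω₂ + K / 2 * Real.sin (θ₁ t - θ₂ t))|) atTop (nhds 0) := by
  set f : ℝ → ℝ := fun y => ω₁ - ω₂ - K * sin y
  have hfreq (t : ℝ) : (ω₁ + K / 2 * sin (θ₂ t - θ₁ t)) - (ω₂ + K / 2 * sin (θ₁ t - θ₂ t)) =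
      f (θ₁ t - θ₂ t) := by
    rw [← neg_sub (θ₁ t), sin_neg]
    ring
  have hφ : IsForwardSolution f (fun t => θ₁ t - θ₂ t) := fun t ht =>
    hfreq t ▸ (h₁ t ht).sub (h₂ t ht)
  have hf : LipschitzWith _ f :=
    (LipschitzWith.const _).sub ((lipschitzWith_smul K).comp lipschitzWith_sin)
  obtain ⟨a, b, ha, hb, hKa, hKb⟩ := exists_nonpos_nonneg_mul_sin_eq hK hgap
  have hbdd (t : ℝ) (ht : 0 ≤ t) : θ₁ t - θ₂ t ∈ Icc a b :=
    hφ.mem_Icc_of_map_eq_zero hf (by simp [f, hKa]) (by simp [f, hKb])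
      (by simpa [hinit] using ⟨ha, hb⟩) ht
  simpa [hfreq] using (hφ.tendsto_map_of_mem_Icc hf hbdd).abs
end

section
/- Theorem 1 (synchronization dichotomy): For the two-oscillator Kuramoto model θ₁' = ω₁ + (K/2)sin(θ₂ − θ₁), θ₂' = ω₂ + (K/2)sin(θ₁ − θ₂) with K > 0, every solution satisfies |θ₁'(t) − θ₂'(t)| → 0 as t → ∞ if and only if |ω₁ − ω₂| ≤ K. -/
/-!
The phase difference `φ = θ₁ - θ₂` solves Adler's equation `φ' = a - K sin φ` with
`a = ω₁ - ω₂`, and `θ₁' - θ₂' = a - K sin φ`. If `|a| ≤ K` the right-hand side vanishes somewhere in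
every interval of length `2π`; by uniqueness a solution never reaches an equilibrium in finite
time unless it stays there, so `φ` is monotone and trapped between two equilibria, hence converges,
and its limit must be an equilibrium. If `|a| > K` then `|a - K sin φ| ≥ |a| - K > 0`, and a global
solution, obtained by separation of variables, yields a pair that never synchronizes.
-/

open Real Filter Set Topology

lemma eq_zero_of_tendsto_of_tendsto_deriv {φ φ' : ℝ → ℝ} {l c : ℝ}
    (hφ : ∀ᶠ t in atTop, HasDerivAt φ (φ' t) t) (hl : Tendsto φ atTop (𝓝 l))
    (hc : Tendsto φ' atTop (𝓝 c)) : c = 0 := by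
  obtain ⟨T, hT⟩ := eventually_atTop.1 hφ
  have hslope : ∀ t ≥ T, ∃ s ≥ t, φ' s = φ (t + 1) - φ t := fun t ht => by
    obtain ⟨s, hs, hφ's⟩ := exists_hasDerivAt_eq_slope φ φ' (lt_add_one t)
      (fun x hx => (hT x (ht.trans hx.1)).continuousAt.continuousWithinAt)
      (fun x hx => hT x (ht.trans hx.1.le))
    exact ⟨s, hs.1.le, by simpa using hφ's⟩
  choose! ξ hξ hφ'ξ using hslope
  have hξ_tendsto : Tendsto ξ atTop atTop :=
    tendsto_atTop_mono' _ ((eventually_ge_atTop T).mono hξ) tendsto_id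
  have hincr : Tendsto (fun t => φ (t + 1) - φ t) atTop (𝓝 (l - l)) :=
    (hl.comp (tendsto_atTop_add_const_right _ 1 tendsto_id)).sub hl
  rw [sub_self] at hincr
  refine tendsto_nhds_unique ((hc.comp hξ_tendsto).congr' ?_) hincr
  filter_upwards [eventually_ge_atTop T] with t ht using hφ'ξ t ht

section AutonomousODE

variable {f φ : ℝ → ℝ} {L : NNReal}

lemma ODE_solution_eq_of_eq_zero (hf : LipschitzWith L f)
    (hφ : ∀ t ≥ 0, HasDerivAt φ (f (φ t)) t) {t₀ : ℝ} (ht₀ : 0 ≤ t₀) (hz : f (φ t₀) = 0) :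
    ∀ t ≥ t₀, φ t = φ t₀ := fun _ ht =>
  ODE_solution_unique (v := fun _ => f) (g := fun _ => φ t₀) (fun _ => hf)
    (fun s hs => (hφ s (ht₀.trans hs.1)).continuousAt.continuousWithinAt)
    (fun s hs => (hφ s (ht₀.trans hs.1)).hasDerivWithinAt)
    continuousOn_const
    (fun s _ => by simpa [hz] using hasDerivWithinAt_const s (Ici s) (φ t₀))
    rfl ⟨ht, le_rfl⟩

lemma ODE_solution_nonneg_or_nonpos (hf : LipschitzWith L f)
    (hφ : ∀ t ≥ 0, HasDerivAt φ (f (φ t)) t) :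
    (∀ t ≥ 0, 0 ≤ f (φ t)) ∨ (∀ t ≥ 0, f (φ t) ≤ 0) := by
  by_contra! ⟨⟨t₁, ht₁, h₁⟩, ⟨t₂, ht₂, h₂⟩⟩
  have hcont : ContinuousOn (fun t => f (φ t)) (uIcc t₁ t₂) := fun s hs =>
    (hf.continuous.continuousAt.comp
      (hφ s ((le_min ht₁ ht₂).trans hs.1)).continuousAt).continuousWithinAt
  obtain ⟨s, hs, hfs⟩ := intermediate_value_uIcc hcont (mem_uIcc.2 (Or.inl ⟨h₁.le, h₂.le⟩))
  have hstuck := ODE_solution_eq_of_eq_zero hf hφ ((le_min ht₁ ht₂).trans hs.1) hfs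
  rcases le_max_iff.1 hs.2 with hs₁ | hs₂
  · exact h₁.ne (hstuck t₁ hs₁ ▸ hfs)
  · exact h₂.ne' (hstuck t₂ hs₂ ▸ hfs)

lemma ODE_solution_le_of_eq_zero (hf : LipschitzWith L f)
    (hφ : ∀ t ≥ 0, HasDerivAt φ (f (φ t)) t) {z : ℝ} (hz : f z = 0) (h₀ : φ 0 ≤ z)
    {t : ℝ} (ht : 0 ≤ t) : φ t ≤ z := by
  by_contra! hlt
  obtain ⟨s, hs, rfl⟩ := intermediate_value_Icc ht
    (fun s hs => (hφ s hs.1).continuousAt.continuousWithinAt) ⟨h₀, hlt.le⟩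
  exact hlt.ne' (ODE_solution_eq_of_eq_zero hf hφ hs.1 hz t hs.2)

lemma tendsto_ODE_field_zero_of_nonneg (hf : LipschitzWith L f)
    (hφ : ∀ t ≥ 0, HasDerivAt φ (f (φ t)) t) (hpos : ∀ t ≥ 0, 0 ≤ f (φ t))
    {z : ℝ} (hz : f z = 0) (h₀ : φ 0 ≤ z) :
    Tendsto (fun t => f (φ t)) atTop (𝓝 0) := by
  have hmono : MonotoneOn φ (Ici 0) := monotoneOn_of_hasDerivWithinAt_nonneg (convex_Ici 0)
    (fun s hs => (hφ s hs).continuousAt.continuousWithinAt)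
    (fun s hs => (hφ s (interior_subset hs)).hasDerivWithinAt)
    (fun s hs => hpos s (interior_subset hs))
  obtain ⟨l, hl⟩ : ∃ l, Tendsto φ atTop (𝓝 l) := by
    have hψ : Monotone fun t => φ (max t 0) := fun s t hst =>
      hmono (le_max_right s 0) (le_max_right t 0) (max_le_max_right 0 hst)
    have hbdd : BddAbove (range fun t => φ (max t 0)) :=
      ⟨z, forall_mem_range.2 fun t => ODE_solution_le_of_eq_zero hf hφ hz h₀ (le_max_right t 0)⟩
    refine ⟨_, (tendsto_atTop_ciSup hψ hbdd).congr' ?_⟩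
    filter_upwards [eventually_ge_atTop 0] with t ht using by rw [max_eq_left ht]
  have hfl : Tendsto (fun t => f (φ t)) atTop (𝓝 (f l)) := (hf.continuous.tendsto l).comp hl
  rwa [eq_zero_of_tendsto_of_tendsto_deriv ((eventually_ge_atTop 0).mono hφ) hl hfl] at hfl

theorem tendsto_ODE_field_zero (hf : LipschitzWith L f)
    (hφ : ∀ t ≥ 0, HasDerivAt φ (f (φ t)) t)
    (hup : ∃ z ≥ φ 0, f z = 0) (hdown : ∃ z ≤ φ 0, f z = 0) :
    Tendsto (fun t => f (φ t)) atTop (𝓝 0) := by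
  obtain ⟨z, hz₀, hz⟩ := hup
  obtain ⟨w, hw₀, hw⟩ := hdown
  rcases ODE_solution_nonneg_or_nonpos hf hφ with hpos | hneg
  · exact tendsto_ODE_field_zero_of_nonneg hf hφ hpos hz hz₀
  · have hf' : LipschitzWith L fun x => -f (-x) :=
      mul_one L ▸ (hf.comp LipschitzWith.id.neg).neg
    have hφ' : ∀ t ≥ 0, HasDerivAt (fun s => -φ s) (-f (-(-φ t))) t := fun t ht =>
      (hφ t ht).neg.congr_deriv (by rw [neg_neg])
    have := tendsto_ODE_field_zero_of_nonneg hf' hφ' (fun t ht => by simpa using hneg t ht)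
      (z := -w) (by simpa using hw) (by simpa using hw₀)
    simpa using this.neg

end AutonomousODE

/-- Separation of variables: the solution is the inverse of the time map `y ↦ ∫₀^y 1 / f`. -/
theorem exists_forall_hasDerivAt_of_pos {f : ℝ → ℝ} {M : ℝ} (hf : Continuous f)
    (hpos : ∀ x, 0 < f x) (hM : ∀ x, f x ≤ M) :
    ∃ φ : ℝ → ℝ, ∀ t, HasDerivAt φ (f (φ t)) t := by
  set T : ℝ → ℝ := fun y => ∫ x in (0 : ℝ)..y, (f x)⁻¹
  have hT : ∀ y, HasDerivAt T (f y)⁻¹ y := fun y =>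
    ((hf.inv₀ fun x => (hpos x).ne').integral_hasStrictDerivAt 0 y).hasDerivAt
  have hM₀ : 0 < M := (hpos 0).trans_le (hM 0)
  have hlinear : Monotone fun y => T y - y / M := monotone_of_hasDerivAt_nonneg
    (fun y => (hT y).sub ((hasDerivAt_id y).div_const M))
    (fun y => sub_nonneg.2 (by simpa [one_div] using inv_anti₀ (hpos y) (hM y)))
  have hT₀ : T 0 = 0 := intervalIntegral.integral_same
  have htop : Tendsto T atTop atTop := by
    refine tendsto_atTop_mono' _ ?_ (tendsto_id.atTop_div_const hM₀)
    filter_upwards [eventually_ge_atTop 0] with y hy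
    simpa [hT₀] using hlinear hy
  have hbot : Tendsto T atBot atBot := by
    refine tendsto_atBot_mono' _ ?_ (tendsto_id.atBot_div_const hM₀)
    filter_upwards [eventually_le_atBot 0] with y hy
    simpa [hT₀] using hlinear hy
  have hTmono : StrictMono T := strictMono_of_hasDerivAt_pos hT fun y => inv_pos.2 (hpos y)
  have hTsurj : Function.Surjective T :=
    (continuous_iff_continuousAt.2 fun y => (hT y).continuousAt).surjective htop hbot
  set e := hTmono.orderIsoOfSurjective T hTsurj
  refine ⟨e.symm, fun t => ?_⟩
  simpa using (hT (e.symm t)).of_local_left_inverse e.symm.continuous.continuousAt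
    (inv_pos.2 (hpos _)).ne'
    (Eventually.of_forall (hTmono.orderIsoOfSurjective_self_symm_apply T hTsurj))

lemma lipschitzWith_sub_mul_sin (a : ℝ) {K : ℝ} (hK : 0 ≤ K) :
    LipschitzWith K.toNNReal fun x => a - K * sin x := by
  refine LipschitzWith.of_dist_le_mul fun x y => ?_
  rw [Real.coe_toNNReal K hK, dist_eq, dist_eq, sub_sub_sub_cancel_left, ← mul_sub, abs_mul,
    abs_of_nonneg hK, abs_sub_comm]
  exact mul_le_mul_of_nonneg_left (abs_sin_sub_sin_le x y) hK

lemma exists_sub_mul_sin_eq_zero_mem_Ico {a K : ℝ} (hK : 0 < K) (ha : |a| ≤ K) (x : ℝ) :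
    ∃ z ∈ Ico x (x + 2 * π), a - K * sin z = 0 := by
  obtain ⟨z, hz, hsin⟩ := sin_periodic.exists_mem_Ico two_pi_pos (arcsin (a / K)) x
  have haK := abs_le.1 ((abs_div a K).trans_le (by rwa [abs_of_pos hK, div_le_one hK]))
  refine ⟨z, hz, ?_⟩
  rw [← hsin, sin_arcsin haK.1 haK.2]
  field_simp
  ring

theorem tendsto_sub_mul_sin_zero {a K : ℝ} {φ : ℝ → ℝ} (hK : 0 < K) (ha : |a| ≤ K)
    (hφ : ∀ t ≥ 0, HasDerivAt φ (a - K * sin (φ t)) t) :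
    Tendsto (fun t => a - K * sin (φ t)) atTop (𝓝 0) := by
  obtain ⟨z, hz, hz₀⟩ := exists_sub_mul_sin_eq_zero_mem_Ico hK ha (φ 0)
  obtain ⟨w, hw, hw₀⟩ := exists_sub_mul_sin_eq_zero_mem_Ico hK ha (φ 0 - 2 * π)
  exact tendsto_ODE_field_zero (f := fun x => a - K * sin x) (lipschitzWith_sub_mul_sin a hK.le)
    hφ ⟨z, hz.1, hz₀⟩ ⟨w, by linarith [hw.2], hw₀⟩

lemma exists_sub_mul_sin_solution {a K : ℝ} (hK : 0 ≤ K) (ha : K < |a|) :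
    ∃ φ : ℝ → ℝ, ∀ t, HasDerivAt φ (a - K * sin (φ t)) t := by
  have hexists : ∀ {b : ℝ}, K < b → ∃ φ : ℝ → ℝ, ∀ t, HasDerivAt φ (b - K * sin (φ t)) t :=
    fun {b} hb => exists_forall_hasDerivAt_of_pos (f := fun x => b - K * sin x) (M := b + K)
      (by fun_prop)
      (fun x => by nlinarith [sin_le_one x]) (fun x => by nlinarith [neg_one_le_sin x])
  rcases lt_abs.1 ha with h | h
  · exact hexists h
  · obtain ⟨ψ, hψ⟩ := hexists h
    exact ⟨fun t => -ψ t, fun t => (hψ t).neg.congr_deriv (by rw [sin_neg]; ring)⟩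

lemma abs_sub_le_abs_sub_mul_sin (a : ℝ) {K : ℝ} (hK : 0 ≤ K) (x : ℝ) :
    |a| - K ≤ |a - K * sin x| := by
  have hsin : |K * sin x| ≤ K := by
    rw [abs_mul, abs_of_nonneg hK]
    exact mul_le_of_le_one_right hK (abs_sin_le_one x)
  linarith [abs_sub_abs_le_abs_sub a (K * sin x)]

lemma kuramoto_frequency_sub (ω₁ ω₂ K x y : ℝ) :
    ω₁ + K / 2 * sin (y - x) - (ω₂ + K / 2 * sin (x - y)) = ω₁ - ω₂ - K * sin (x - y) := by
  rw [← neg_sub x y, sin_neg]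
  ring

lemma kuramoto_of_phase_difference {ω₁ ω₂ K : ℝ} {φ : ℝ → ℝ}
    (hφ : ∀ t, HasDerivAt φ (ω₁ - ω₂ - K * sin (φ t)) t) :
    ∃ θ₁ θ₂ : ℝ → ℝ, (∀ t, θ₁ t - θ₂ t = φ t) ∧
      (∀ t, HasDerivAt θ₁ (ω₁ + K / 2 * sin (θ₂ t - θ₁ t)) t) ∧
      (∀ t, HasDerivAt θ₂ (ω₂ + K / 2 * sin (θ₁ t - θ₂ t)) t) := by
  set θ₁ := fun t => ((ω₁ + ω₂) * t + φ t) / 2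
  set θ₂ := fun t => ((ω₁ + ω₂) * t - φ t) / 2
  have hdiff : ∀ t, θ₁ t - θ₂ t = φ t := fun t => by simp only [θ₁, θ₂]; ring
  refine ⟨θ₁, θ₂, hdiff, fun t => ?_, fun t => ?_⟩
  · refine ((((hasDerivAt_id t).const_mul _).add (hφ t)).div_const 2).congr_deriv ?_
    rw [← neg_sub (θ₁ t), hdiff, sin_neg]
    ring
  · refine ((((hasDerivAt_id t).const_mul _).sub (hφ t)).div_const 2).congr_deriv ?_
    rw [hdiff]
    ring

theorem stmt10 (K ω₁ ω₂ : ℝ) (hK : 0 < K) :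
    (∀ θ₁ θ₂ : ℝ → ℝ,
      (∀ t ≥ 0, HasDerivAt θ₁ (ω₁ + K / 2 * Real.sin (θ₂ t - θ₁ t)) t) →
      (∀ t ≥ 0, HasDerivAt θ₂ (ω₂ + K / 2 * Real.sin (θ₁ t - θ₂ t)) t) →
      Tendsto (fun t => |(ω₁ + K / 2 * Real.sin (θ₂ t - θ₁ t)) -
        (ω₂ + K / 2 * Real.sin (θ₁ t - θ₂ t))|) atTop (nhds 0))
    ↔ |ω₁ - ω₂| ≤ K := by
  constructor
  · intro hsync
    by_contra! hlt
    obtain ⟨φ, hφ⟩ := exists_sub_mul_sin_solution hK.le hlt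
    obtain ⟨θ₁, θ₂, hdiff, h₁, h₂⟩ := kuramoto_of_phase_difference (K := K) hφ
    have hlim := hsync _ _ (fun t _ => h₁ t) (fun t _ => h₂ t)
    simp_rw [kuramoto_frequency_sub, hdiff] at hlim
    linarith [ge_of_tendsto' hlim fun t => abs_sub_le_abs_sub_mul_sin (ω₁ - ω₂) hK.le (φ t)]
  · intro hlock θ₁ θ₂ h₁ h₂
    have hφ : ∀ t ≥ 0, HasDerivAt (fun s => θ₁ s - θ₂ s) (ω₁ - ω₂ - K * sin (θ₁ t - θ₂ t)) t :=
      fun t ht => kuramoto_frequency_sub ω₁ ω₂ K (θ₁ t) (θ₂ t) ▸ (h₁ t ht).sub (h₂ t ht)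
    simpa only [kuramoto_frequency_sub, abs_zero] using
      (tendsto_sub_mul_sin_zero hK hlock hφ).abs
end
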